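/- arXiv:hep-th/0011161 — 2 statements merged into one kernel-verified Lean document; each statement's English description precedes it below -/
import Mathlib

section
/- The coproduct of Q^n_m in the Hopf algebra H^dif is given by Δ(Q^n_m) = 1 ⊗ Q^n_m + Q^n_m ⊗ 1 + Σ_{k=1}^{m-1} Q^{n+m-k}_k ⊗ Q^n_{m-k} for m ≥ 2 and n ≥ 0, while Δ(Q^n_1) = 1 ⊗ Q^n_1 + Q^n_1 ⊗ 1. -/
open scoped TensorProduct

/-- The free associative unital `ℂ`-algebra `ℂ⟨a_1, a_2, ...⟩`. -/
abbrev Hdif : Type := FreeAlgebra ℂ ℕ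

/-- The generators `a_n`. -/
noncomputable def gen : ℕ → Hdif := FreeAlgebra.ι ℂ

/-- The noncommutative symmetric polynomial
`P_m^{(k)}(a) = Σ_{j_1+···+j_k = m, j_i ≥ 1} a_{j_1}···a_{j_k}`. -/
noncomputable def Pp {A : Type*} [Ring A] (a : ℕ → A) (k m : ℕ) : A :=
  ∑ j : Fin k → Fin (m + 1),
    if (∀ i, 1 ≤ (j i : ℕ)) ∧ (∑ i, (j i : ℕ)) = m then
      (List.ofFn fun i => a ((j i : ℕ))).prod
    else 0

/-- `Q^l_m(a) = Σ_{k=1}^m C(l+1,k) P^{(k)}_m(a)`, with `C(l+1,k) = 0` for `k > l+1`. -/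
noncomputable def Qp {A : Type*} [Ring A] (a : ℕ → A) (l m : ℕ) : A :=
  ∑ k ∈ Finset.Icc 1 m, ((l + 1).choose k) • Pp a k m

/-- The coproduct `Δ : H^dif → H^dif ⊗ H^dif`, the unique algebra morphism with
`Δ(a_n) = 1 ⊗ a_n + a_n ⊗ 1 + Σ_{m=1}^{n-1} Q^{n-m}_m(a) ⊗ a_{n-m}`. -/
noncomputable def Δdif : Hdif →ₐ[ℂ] Hdif ⊗[ℂ] Hdif :=
  FreeAlgebra.lift ℂ fun n =>
    1 ⊗ₜ[ℂ] gen n + gen n ⊗ₜ[ℂ] 1 +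
      ∑ m ∈ Finset.Icc 1 (n - 1), Qp gen (n - m) m ⊗ₜ[ℂ] gen (n - m)

/-!
Put `A(t) = 1 + Σ_{n ≥ 1} a_n t^n`. Since `P^{(k)}_m` is the coefficient of `t^m` in `(A - 1)^k`,
the binomial theorem makes `Q^l_m` the coefficient of `t^m` in `A^{l+1}`. Applied coefficientwise,
`Δ` sends `A` to `Σ_r t^r A^{r+1} ⊗ a_r` (with `a_0 = 1`), and because powers of `A` commute with
each other the `N`-th power of this series is `Σ_r t^r A^{r+N} ⊗ [t^r] A^N`. Taking `N = n + 1`,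
the coefficient of `t^m` and separating the terms `r = m` and `r = 0` gives the formula.
-/

open PowerSeries Finset TensorProduct

theorem Finset.Nat.sum_antidiagonal_antidiagonal_antidiagonal {M : Type*} [AddCommMonoid M]
    (p : ℕ) (f : ℕ → ℕ → ℕ → ℕ → M) :
    ∑ uv ∈ antidiagonal p, ∑ al ∈ antidiagonal uv.1, ∑ bj ∈ antidiagonal uv.2,
      f al.1 al.2 bj.1 bj.2 =
    ∑ sr ∈ antidiagonal p, ∑ ab ∈ antidiagonal sr.1, ∑ lj ∈ antidiagonal sr.2,
      f ab.1 lj.1 ab.2 lj.2 := by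
  simp_rw [← sum_product']
  rw [sum_sigma', sum_sigma']
  refine sum_nbij' (fun x => ⟨(x.2.1.1 + x.2.2.1, x.2.1.2 + x.2.2.2), (x.2.1.1, x.2.2.1),
      (x.2.1.2, x.2.2.2)⟩) (fun x => ⟨(x.2.1.1 + x.2.2.1, x.2.1.2 + x.2.2.2), (x.2.1.1, x.2.2.1),
      (x.2.1.2, x.2.2.2)⟩) ?_ ?_ ?_ ?_ (fun _ _ => rfl) <;>
  rintro ⟨⟨u, v⟩, ⟨a, l⟩, ⟨b, j⟩⟩ hx <;>
  simp only [mem_sigma, mem_product, HasAntidiagonal.mem_antidiagonal] at hx ⊢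
  · exact ⟨by omega, trivial, trivial⟩
  · exact ⟨by omega, trivial, trivial⟩
  · obtain ⟨-, rfl, rfl⟩ := hx; rfl
  · obtain ⟨-, rfl, rfl⟩ := hx; rfl

theorem Finset.Nat.sum_antidiagonal_eq_add_add_sum_Icc {M : Type*} [AddCommMonoid M] {p : ℕ}
    (hp : 1 ≤ p) (f : ℕ × ℕ → M) :
    ∑ x ∈ antidiagonal p, f x = f (0, p) + f (p, 0) + ∑ k ∈ Icc 1 (p - 1), f (k, p - k) := by
  have hrange : range (p + 1) = insert 0 (insert p (Icc 1 (p - 1))) := by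
    ext x; simp only [mem_range, mem_insert, mem_Icc]; omega
  rw [Nat.sum_antidiagonal_eq_sum_range_succ_mk, hrange, sum_insert (by simp; omega),
    sum_insert (by simp; omega), Nat.sub_zero, Nat.sub_self, add_assoc]

/-- Entries are bounded by some `M ≥ m` rather than by `m`, so that the induction on `k` can keep
the same index type while the target degree drops. -/
theorem PowerSeries.coeff_pow_eq_sum_fin {R : Type*} [Semiring R] (φ : R⟦X⟧) (k : ℕ) {m M : ℕ}
    (hm : m ≤ M) :
    coeff m (φ ^ k) = ∑ j : Fin k → Fin (M + 1),
      if ∑ i, (j i : ℕ) = m then (List.ofFn fun i => coeff (j i) φ).prod else 0 := by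
  induction k generalizing m with
  | zero => simp [coeff_one, eq_comm]
  | succ k ih =>
    have hsplit : ∀ x : ℕ, (∑ g : Fin k → Fin (M + 1),
        if x + ∑ i, (g i : ℕ) = m then coeff x φ * (List.ofFn fun i => coeff (g i) φ).prod
        else 0) = if x ≤ m then coeff x φ * coeff (m - x) (φ ^ k) else 0 := by
      intro x
      split_ifs with hx
      · rw [ih (by omega), mul_sum]
        refine sum_congr rfl fun g _ => ?_
        rw [mul_ite, mul_zero]
        exact if_congr (by omega) rfl rfl
      · exact sum_eq_zero fun g _ => if_neg (by omega)
    rw [← (Fin.consEquiv fun _ => Fin (M + 1)).sum_comp, Fintype.sum_prod_type]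
    simp only [Fin.consEquiv_apply, Fin.sum_univ_succ (n := k), Fin.cons_zero, Fin.cons_succ,
      List.ofFn_succ, List.prod_cons, hsplit]
    rw [Fin.sum_univ_eq_sum_range (fun x => if x ≤ m then coeff x φ * coeff (m - x) (φ ^ k)
      else 0), ← sum_filter, pow_succ', coeff_mul, Nat.sum_antidiagonal_eq_sum_range_succ_mk]
    congr 1
    ext x
    simp only [mem_range, mem_filter]
    omega

section GeneratingSeries

variable {A : Type*} [Ring A] (a : ℕ → A)

/-- `Σ_{n ≥ 1} a_n t^n`; the value `a 0` is ignored, as the paper indexes the `a_n` from `1`. -/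
noncomputable def genSeries : A⟦X⟧ :=
  mk fun n => if n = 0 then 0 else a n

theorem coeff_genSeries (n : ℕ) : coeff n (genSeries a) = if n = 0 then 0 else a n :=
  coeff_mk _ _

theorem coeff_genSeries_pow (k m : ℕ) : coeff m (genSeries a ^ k) = Pp a k m := by
  rw [coeff_pow_eq_sum_fin _ k le_rfl, Pp]
  refine sum_congr rfl fun j _ => ?_
  by_cases hpos : ∀ i, 1 ≤ (j i : ℕ)
  · simp only [hpos, implies_true, true_and, coeff_genSeries]
    congr 3 with i
    exact if_neg (by have := hpos i; omega)
  · obtain ⟨i, hi⟩ := not_forall.mp hpos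
    simp only [hpos, false_and, if_false, ite_eq_right_iff]
    refine fun _ => List.prod_eq_zero (List.mem_ofFn.mpr ⟨i, ?_⟩)
    rw [coeff_genSeries, if_pos (by omega)]

theorem constantCoeff_genSeries : constantCoeff (genSeries a) = 0 := by
  rw [← coeff_zero_eq_constantCoeff_apply, coeff_genSeries, if_pos rfl]

theorem coeff_one_add_genSeries {n : ℕ} (hn : n ≠ 0) : coeff n (1 + genSeries a) = a n := by
  rw [map_add, coeff_one, coeff_genSeries, if_neg hn, if_neg hn, zero_add]

theorem constantCoeff_one_add_genSeries : constantCoeff (1 + genSeries a) = 1 := by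
  rw [map_add, map_one, constantCoeff_genSeries, add_zero]

theorem constantCoeff_one_add_genSeries_pow (N : ℕ) :
    constantCoeff ((1 + genSeries a) ^ N) = 1 := by
  rw [map_pow, constantCoeff_one_add_genSeries, one_pow]

theorem coeff_genSeries_pow_eq_zero_of_lt {k m : ℕ} (h : m < k) :
    coeff m (genSeries a ^ k) = 0 :=
  coeff_of_lt_order _ <| lt_of_lt_of_le (by exact_mod_cast h) <|
    le_order_pow_of_constantCoeff_eq_zero k (constantCoeff_genSeries a)

theorem coeff_one_add_genSeries_pow {m : ℕ} (l : ℕ) (hm : 1 ≤ m) :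
    coeff m ((1 + genSeries a) ^ (l + 1)) = Qp a l m := by
  rw [add_comm, (Commute.one_right _).add_pow', Nat.sum_antidiagonal_eq_sum_range_succ
    (fun i j => (l + 1).choose i • (genSeries a ^ i * 1 ^ j)), map_sum, Qp]
  simp only [one_pow, mul_one, map_nsmul, ← coeff_genSeries_pow]
  refine (sum_subset (s₂ := range (l + m + 2)) (fun k => by simp; omega) ?_).trans
    (sum_subset (fun k => by simp; omega) ?_).symm
  · intro k _ hk
    rw [Nat.choose_eq_zero_of_lt (by simp at hk; omega), zero_smul]
  · intro k _ hk
    rcases Nat.eq_zero_or_pos k with rfl | hk0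
    · rw [pow_zero, coeff_one, if_neg (by omega), smul_zero]
    · rw [coeff_genSeries_pow_eq_zero_of_lt a (by simp at hk; omega), smul_zero]

end GeneratingSeries

section TwistedPow

variable {R S T : Type*} [CommSemiring R] [Semiring S] [Algebra R S] [Semiring T] [Algebra R T]

/-- `Σ_r t^r F^(r+N) ⊗ [t^r] G^N`. For `F = G = A(t)` and `N = 1` this is the image of `A(t)` under
the coproduct, which is dual to the composition of the formal diffeomorphisms `t A(t)`. -/
noncomputable def twistedPow (F : S⟦X⟧) (G : T⟦X⟧) (N : ℕ) : (S ⊗[R] T)⟦X⟧ :=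
  mk fun p => ∑ sr ∈ antidiagonal p, coeff sr.1 (F ^ (sr.2 + N)) ⊗ₜ[R] coeff sr.2 (G ^ N)

variable (F : S⟦X⟧) (G : T⟦X⟧)

theorem coeff_twistedPow (N p : ℕ) : coeff p (twistedPow (R := R) F G N) =
    ∑ sr ∈ antidiagonal p, coeff sr.1 (F ^ (sr.2 + N)) ⊗ₜ[R] coeff sr.2 (G ^ N) :=
  coeff_mk _ _

theorem twistedPow_zero : twistedPow (R := R) F G 0 = 1 := by
  ext p
  rw [coeff_twistedPow, coeff_one, sum_eq_single (p, 0)]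
  · simp only [add_zero, pow_zero, coeff_one, if_true]
    split_ifs <;> simp [Algebra.TensorProduct.one_def]
  · rintro ⟨s, r⟩ hsr hne
    have hr : r ≠ 0 := by rintro rfl; simp_all
    rw [pow_zero, coeff_one, if_neg hr, tmul_zero]
  · simp

theorem twistedPow_add (M N : ℕ) :
    twistedPow (R := R) F G (M + N) = twistedPow F G M * twistedPow F G N := by
  ext p
  simp_rw [coeff_mul, coeff_twistedPow, sum_mul_sum, Algebra.TensorProduct.tmul_mul_tmul]
  rw [Nat.sum_antidiagonal_antidiagonal_antidiagonal p fun a l b j =>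
    (coeff a (F ^ (l + M)) * coeff b (F ^ (j + N))) ⊗ₜ[R] (coeff l (G ^ M) * coeff j (G ^ N))]
  refine sum_congr rfl fun sr hsr => ?_
  rw [sum_comm]
  simp_rw [← sum_tmul, ← coeff_mul, ← pow_add]
  rw [sum_congr rfl fun lj hlj => by rw [show lj.1 + M + (lj.2 + N) = sr.2 + (M + N) by
    rw [HasAntidiagonal.mem_antidiagonal] at hlj hsr; omega], ← tmul_sum, ← coeff_mul, ← pow_add]

theorem twistedPow_one_pow (N : ℕ) : twistedPow (R := R) F G 1 ^ N = twistedPow F G N := by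
  induction N with
  | zero => rw [pow_zero, twistedPow_zero]
  | succ N ih => rw [pow_succ, ih, twistedPow_add]

end TwistedPow

theorem Δdif_gen (n : ℕ) :
    Δdif (gen n) = 1 ⊗ₜ[ℂ] gen n + gen n ⊗ₜ[ℂ] 1 +
      ∑ m ∈ Icc 1 (n - 1), Qp gen (n - m) m ⊗ₜ[ℂ] gen (n - m) :=
  FreeAlgebra.lift_ι_apply _ _

theorem map_Δdif_one_add_genSeries :
    map (Δdif : Hdif →+* Hdif ⊗[ℂ] Hdif) (1 + genSeries gen) =
      twistedPow (1 + genSeries gen) (1 + genSeries gen) 1 := by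
  ext p
  rw [coeff_map, AlgHom.coe_toRingHom, coeff_twistedPow]
  rcases Nat.eq_zero_or_pos p with rfl | hp
  · simp [constantCoeff_genSeries, Algebra.TensorProduct.one_def]
  · rw [Nat.sum_antidiagonal_eq_add_add_sum_Icc hp, coeff_one_add_genSeries gen hp.ne',
      Δdif_gen]
    simp only [zero_add, pow_one, coeff_zero_eq_constantCoeff_apply,
      constantCoeff_one_add_genSeries_pow, constantCoeff_one_add_genSeries,
      coeff_one_add_genSeries gen hp.ne']
    congr 1
    refine sum_congr rfl fun k hk => ?_
    rw [mem_Icc] at hk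
    rw [coeff_one_add_genSeries_pow gen _ (by omega), coeff_one_add_genSeries gen (by omega)]

/-- `Δ(Q^n_m) = 1 ⊗ Q^n_m + Q^n_m ⊗ 1 + Σ_{k=1}^{m-1} Q^{n+m-k}_k ⊗ Q^n_{m-k}`
for `m ≥ 1` and `n ≥ 0` (for `m = 1` the sum is empty and `Q^n_1` is primitive). -/
theorem Δdif_Qp (n m : ℕ) (hm : 1 ≤ m) :
    Δdif (Qp gen n m) =
      1 ⊗ₜ[ℂ] Qp gen n m + Qp gen n m ⊗ₜ[ℂ] 1 +
        ∑ k ∈ Finset.Icc 1 (m - 1), Qp gen (n + m - k) k ⊗ₜ[ℂ] Qp gen n (m - k) := by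
  have hΔ : Δdif (Qp gen n m) =
      coeff m (twistedPow (1 + genSeries gen) (1 + genSeries gen) (n + 1)) := by
    rw [← coeff_one_add_genSeries_pow gen n hm, ← twistedPow_one_pow, ← map_Δdif_one_add_genSeries,
      ← map_pow, coeff_map, AlgHom.coe_toRingHom]
  rw [hΔ, coeff_twistedPow, Nat.sum_antidiagonal_eq_add_add_sum_Icc hm]
  simp only [coeff_zero_eq_constantCoeff_apply, constantCoeff_one_add_genSeries_pow, zero_add,
    coeff_one_add_genSeries_pow gen n hm]
  congr 1
  refine sum_congr rfl fun k hk => ?_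
  rw [mem_Icc] at hk
  rw [show m - k + (n + 1) = n + m - k + 1 by omega, coeff_one_add_genSeries_pow gen _ (by omega),
    coeff_one_add_genSeries_pow gen n (by omega)]
end

section
/- Let f(x) = 1 + Σ_{n≥1} x^n b_n(f) and g(x) = x + Σ_{n≥1} x^{n+1} a_n(g) be formal power series over ℂ. Then b_n(f∘g) = b_n(f) + Σ_{m=1}^{n-1} Q^{n-m-1}_m(a_*(g)) b_{n-m}(f) for all n ≥ 1. -/
/-- Composition `f ∘ g` of formal power series (for `g` with zero constant term):
the `N`-th coefficient is `Σ_{k=0}^{N} (coeff k f) · (coeff N g^k)`. -/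
noncomputable def comp (f g : PowerSeries ℂ) : PowerSeries ℂ :=
  PowerSeries.mk fun N =>
    ∑ k ∈ Finset.range (N + 1),
      (PowerSeries.coeff (R := ℂ) k f) * PowerSeries.coeff (R := ℂ) N (g ^ k)

/-!
Write `g = X * s` with `coeff 0 s = 1`, so `coeff n (g ^ k) = coeff (n - k) (s ^ k)`. Expanding
`s ^ k = (1 + (s - 1)) ^ k` binomially and using that the coefficients of `(s - 1) ^ i` are the
`P^{(i)}(a)` turns this into `Σ_i C(k, i) P^{(i)}_{n-k}(a)`, which is `Q^{k-1}_{n-k}(a)` for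
`1 ≤ k < n` and `1` for `k = n`. Summing against `b_k(f)` and reindexing by `m = n - k` gives
the formula.
-/

open PowerSeries

section Pp

variable {A : Type*} [Ring A] (a : ℕ → A)

lemma Pp_zero_left (m : ℕ) : Pp a 0 m = if m = 0 then 1 else 0 := by
  simp [Pp, eq_comm]

lemma Pp_eq_zero_of_lt {k m : ℕ} (h : m < k) : Pp a k m = 0 := by
  refine Finset.sum_eq_zero fun j _ => if_neg ?_
  rintro ⟨hpos, hsum⟩
  have : k ≤ ∑ i, (j i : ℕ) := by
    simpa using Finset.card_nsmul_le_sum Finset.univ (fun i => (j i : ℕ)) 1 fun i _ => hpos i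
  omega

lemma Pp_eq_sum_of_le {k m M : ℕ} (h : m ≤ M) :
    Pp a k m = ∑ j : Fin k → Fin (M + 1),
      if (∀ i, 1 ≤ (j i : ℕ)) ∧ (∑ i, (j i : ℕ)) = m then
        (List.ofFn fun i => a (j i : ℕ)).prod
      else 0 := by
  refine Fintype.sum_of_injective (Fin.castLE (Nat.succ_le_succ h) ∘ ·)
    (Fin.castLE_injective _).comp_left _ _ (fun j hj => if_neg ?_) fun j => rfl
  rintro ⟨-, hsum⟩
  have hle (i) : (j i : ℕ) ≤ m :=
    hsum ▸ Finset.single_le_sum (f := fun i => (j i : ℕ)) (by simp) (Finset.mem_univ i)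
  exact hj ⟨fun i => ⟨j i, by grind⟩, rfl⟩

lemma Pp_succ (k m : ℕ) :
    Pp a (k + 1) m =
      ∑ p ∈ Finset.range (m + 1), if 1 ≤ p then a p * Pp a k (m - p) else 0 := by
  rw [Pp, ← (Fin.consEquiv fun _ => Fin (m + 1)).sum_comp, Fintype.sum_prod_type,
    ← Fin.sum_univ_eq_sum_range (fun p => if 1 ≤ p then a p * Pp a k (m - p) else 0)]
  refine Fintype.sum_congr _ _ fun p => ?_
  split_ifs with hp
  · rw [Pp_eq_sum_of_le a (Nat.sub_le m p), Finset.mul_sum]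
    refine Fintype.sum_congr _ _ fun t => ?_
    simp only [Fin.consEquiv_apply, Fin.forall_fin_succ, Fin.cons_zero, Fin.cons_succ,
      Fin.sum_univ_succ, List.ofFn_succ, List.prod_cons, mul_ite, mul_zero]
    refine if_congr ?_ rfl rfl
    simp only [hp, true_and]
    exact and_congr_right fun _ => by omega
  · refine Finset.sum_eq_zero fun t _ => if_neg ?_
    simp [Fin.forall_fin_succ, hp]

lemma Qp_eq_sum_range {m : ℕ} (hm : 1 ≤ m) (l : ℕ) :
    Qp a l m = ∑ i ∈ Finset.range (l + 2), (l + 1).choose i • Pp a i m := by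
  have hsub : Finset.range (l + 2) ⊆ Finset.range (l + m + 2) :=
    Finset.range_subset_range.mpr (by omega)
  rw [Qp, Finset.sum_subset hsub fun i _ hi => by
    rw [Nat.choose_eq_zero_of_lt (by simp at hi; omega), zero_smul]]
  refine Finset.sum_subset (fun i hi => by simp at hi ⊢; omega) fun i _ hi => ?_
  obtain rfl | hmi : i = 0 ∨ m < i := by simp at hi; omega
  · rw [Pp_zero_left, if_neg (by omega), smul_zero]
  · rw [Pp_eq_zero_of_lt a hmi, smul_zero]

end Pp

section PowerSeries

variable {A : Type*} [Ring A]

lemma coeff_pow_eq_Pp {h : A⟦X⟧} {a : ℕ → A} (h0 : coeff 0 h = 0)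
    (ha : ∀ j, 1 ≤ j → coeff j h = a j) (k m : ℕ) : coeff m (h ^ k) = Pp a k m := by
  induction k generalizing m with
  | zero => rw [pow_zero, coeff_one, Pp_zero_left]
  | succ k ih =>
    rw [pow_succ', coeff_mul, Finset.Nat.sum_antidiagonal_eq_sum_range_succ_mk, Pp_succ]
    refine Finset.sum_congr rfl fun p _ => ?_
    split_ifs with hp
    · rw [ha p hp, ih]
    · rw [show p = 0 by omega, h0, zero_mul]

lemma coeff_pow_eq_sum_choose_smul_Pp {s : A⟦X⟧} (hs : coeff 0 s = 1) (k m : ℕ) :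
    coeff m (s ^ k) =
      ∑ i ∈ Finset.range (k + 1), k.choose i • Pp (fun j => coeff j s) i m := by
  have h0 : coeff 0 (s - 1) = 0 := by rw [map_sub, hs, coeff_zero_one, sub_self]
  have ha (j) (hj : 1 ≤ j) : coeff j (s - 1) = coeff j s := by
    simp [coeff_one, show j ≠ 0 by omega]
  conv_lhs => rw [← sub_add_cancel s 1, (Commute.one_right _).add_pow, map_sum]
  refine Finset.sum_congr rfl fun i _ => ?_
  rw [one_pow, mul_one, ← nsmul_eq_mul', map_nsmul, coeff_pow_eq_Pp h0 ha]

lemma coeff_add_pow_eq_coeff_shift_pow {g : A⟦X⟧} (hg0 : coeff 0 g = 0) (k m : ℕ) :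
    coeff (m + k) (g ^ k) = coeff m ((mk fun p => coeff (p + 1) g) ^ k) := by
  have hg : g = X * mk fun p => coeff (p + 1) g := by
    simpa [← coeff_zero_eq_constantCoeff_apply, hg0] using sub_const_eq_X_mul_shift g
  conv_lhs => rw [hg, ((commute_X _).symm).mul_pow, coeff_X_pow_mul]

lemma coeff_self_pow {g : A⟦X⟧} (hg0 : coeff 0 g = 0) (hg1 : coeff 1 g = 1) (k : ℕ) :
    coeff k (g ^ k) = 1 := by
  simpa [coeff_zero_eq_constantCoeff_apply, hg1] using
    coeff_add_pow_eq_coeff_shift_pow hg0 k 0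

lemma coeff_pow_eq_Qp {g : A⟦X⟧} (hg0 : coeff 0 g = 0) (hg1 : coeff 1 g = 1) {k n : ℕ}
    (hk : 1 ≤ k) (hkn : k < n) :
    coeff n (g ^ k) = Qp (fun j => coeff (j + 1) g) (k - 1) (n - k) := by
  obtain ⟨l, rfl⟩ := Nat.exists_eq_add_of_le' hk
  obtain ⟨m, rfl⟩ := Nat.exists_eq_add_of_le' hkn.le
  have hs : coeff 0 (mk fun p => coeff (p + 1) g) = 1 := by rwa [coeff_mk]
  rw [coeff_add_pow_eq_coeff_shift_pow hg0, coeff_pow_eq_sum_choose_smul_Pp hs,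
    Nat.add_sub_cancel, Nat.add_sub_cancel, Qp_eq_sum_range _ (by omega)]
  simp only [coeff_mk]

end PowerSeries

/-- Here `b_n(f) = coeff n f` and `a_n(g) = coeff (n + 1) g`. -/
theorem comp_coeff_b_general (f g : PowerSeries ℂ)
    (hg0 : PowerSeries.coeff (R := ℂ) 0 g = 0) (hg1 : PowerSeries.coeff (R := ℂ) 1 g = 1)
    (n : ℕ) (hn : 1 ≤ n) :
    PowerSeries.coeff (R := ℂ) n (comp f g) =
      PowerSeries.coeff (R := ℂ) n f +
        ∑ m ∈ Finset.Icc 1 (n - 1),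
          Qp (fun j => PowerSeries.coeff (R := ℂ) (j + 1) g) (n - m - 1) m *
            PowerSeries.coeff (R := ℂ) (n - m) f := by
  obtain ⟨n, rfl⟩ := Nat.exists_eq_add_of_le' hn
  have hreflect := Finset.sum_Ico_reflect (fun k => coeff k f * coeff (n + 1) (g ^ k)) 1
    (Nat.le_succ (n + 1))
  rw [comp, coeff_mk, Finset.sum_range_succ, Finset.range_eq_Ico,
    Finset.sum_eq_sum_Ico_succ_bot (Nat.succ_pos n), Nat.add_sub_cancel,
    ← Finset.Ico_add_one_right_eq_Icc]
  simp only [Nat.add_sub_cancel, Nat.add_sub_cancel_left] at hreflect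
  simp only [zero_add, Nat.succ_eq_add_one, ← hreflect, pow_zero, coeff_one,
    coeff_self_pow hg0 hg1]
  rw [if_neg n.succ_ne_zero, mul_zero, zero_add, mul_one, add_comm]
  refine congrArg _ (Finset.sum_congr rfl fun m hm => ?_)
  rw [Finset.mem_Ico] at hm
  rw [coeff_pow_eq_Qp hg0 hg1 (by omega) (by omega), Nat.sub_sub_self hm.2.le, mul_comm]

/-- For `f(x) = 1 + Σ_{n≥1} x^n b_n(f)` (so `b_n(f) = coeff_n f`) and
`g(x) = x + Σ_{n≥1} x^{n+1} a_n(g)` (so `a_n(g) = coeff_{n+1} g`),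
`b_n(f∘g) = b_n(f) + Σ_{m=1}^{n-1} Q^{n-m-1}_m(a_*(g)) b_{n-m}(f)` for `n ≥ 1`. -/
theorem comp_coeff_b (f g : PowerSeries ℂ)
    (hf0 : PowerSeries.coeff (R := ℂ) 0 f = 1)
    (hg0 : PowerSeries.coeff (R := ℂ) 0 g = 0) (hg1 : PowerSeries.coeff (R := ℂ) 1 g = 1)
    (n : ℕ) (hn : 1 ≤ n) :
    PowerSeries.coeff (R := ℂ) n (comp f g) =
      PowerSeries.coeff (R := ℂ) n f +
        ∑ m ∈ Finset.Icc 1 (n - 1),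
          Qp (fun j => PowerSeries.coeff (R := ℂ) (j + 1) g) (n - m - 1) m *
            PowerSeries.coeff (R := ℂ) (n - m) f :=
  comp_coeff_b_general f g hg0 hg1 n hn
end
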